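/- Let φ(x,t) = t^p + a(x) t^q with 1 < p < q < ∞ and a a nonnegative function in C^{0,α}(ℝⁿ) for some α ∈ (0,1]. Let E be a compact subset of a bounded open set O ⊆ ℝⁿ. Then there is a constant c = c(p,q) > 0 such that cap_φ^inf(E;O) ≥ c · min{ cap_p(E;O), |O| · (cap_p(E;O)/|O|)^{q/p} }, where |O| denotes the Lebesgue measure of O. -/

import Mathlib

open MeasureTheory Metric Set

noncomputable section

/-- Euclidean space `ℝⁿ`. -/
abbrev En (n : ℕ) : Type := EuclideanSpace ℝ (Fin n)

/-- Norm of the (a.e. defined, by Rademacher's theorem) gradient of `u` at `x`. -/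
def gnorm {n : ℕ} (u : En n → ℝ) (x : En n) : ℝ := ‖fderiv ℝ u x‖

/-- Admissible test functions for the level-`t` capacity of `E` in `O`:
Lipschitz on the closure of `O`, `u ≥ t` on `E`, `u = 0` on `∂O`. -/
def Adm {n : ℕ} (E O : Set (En n)) (t : ℝ) : Set (En n → ℝ) :=
  {u | (∃ K, LipschitzOnWith K u (closure O)) ∧ (∀ x ∈ E, t ≤ u x) ∧
    ∀ x ∈ frontier O, u x = 0}

/-- Level-`t` variational capacity with integrand `ψ` and normalization `ψm`. -/
def capLevel {n : ℕ} (ψ : En n → ℝ → ℝ) (ψm : ℝ → ℝ)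
    (E O : Set (En n)) (t : ℝ) : ℝ :=
  sInf ((fun u => ∫ x in O, ψ x (gnorm u x) / ψm t) '' Adm E O t)

/-- Infimal capacity with integrand `ψ` and normalization `ψm`. -/
def capInfGen {n : ℕ} (ψ : En n → ℝ → ℝ) (ψm : ℝ → ℝ) (E O : Set (En n)) : ℝ :=
  ⨅ t : Ioi (0 : ℝ), capLevel ψ ψm E O (t : ℝ)

/-- The double-phase integrand `φ(x,t) = t^p + a(x) t^q`. -/
def phi {n : ℕ} (a : En n → ℝ) (p q : ℝ) (x : En n) (t : ℝ) : ℝ :=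
  t ^ p + a x * t ^ q

/-- `a_O^- = inf_{x ∈ O} a(x)`. -/
def aInfOn {n : ℕ} (a : En n → ℝ) (O : Set (En n)) : ℝ := sInf (a '' O)

/-- `a_O^+ = sup_{x ∈ O} a(x)`. -/
def aSupOn {n : ℕ} (a : En n → ℝ) (O : Set (En n)) : ℝ := sSup (a '' O)

/-- `φ_O^-(t) = t^p + a_O^- t^q`. -/
def phiMinus {n : ℕ} (a : En n → ℝ) (p q : ℝ) (O : Set (En n)) (t : ℝ) : ℝ :=
  t ^ p + aInfOn a O * t ^ q

/-- Level-`t` variational capacity for the double-phase integrand. -/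
def capPhiLevel {n : ℕ} (a : En n → ℝ) (p q t : ℝ) (E O : Set (En n)) : ℝ :=
  capLevel (phi a p q) (phiMinus a p q O) E O t

/-- Infimal `φ`-capacity. -/
def capPhiInf {n : ℕ} (a : En n → ℝ) (p q : ℝ) (E O : Set (En n)) : ℝ :=
  ⨅ t : Ioi (0 : ℝ), capPhiLevel a p q (t : ℝ) E O

/-- Variational `p`-capacity. -/
def capP {n : ℕ} (p : ℝ) (E O : Set (En n)) : ℝ :=
  sInf ((fun u => ∫ x in O, gnorm u x ^ p) '' Adm E O 1)

/-- The rescaled set `{x ∈ B̄(0,1/2) : z + r x ∈ E}`. -/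
def shiftedSet {n : ℕ} (E : Set (En n)) (z : En n) (r : ℝ) : Set (En n) :=
  {x ∈ closedBall (0 : En n) (1 / 2) | z + r • x ∈ E}

/-- Local uniform infimal `φ`-fatness with parameters `cfat` and `ro`. -/
def LocUnifPhiFat {n : ℕ} (a : En n → ℝ) (p q : ℝ) (E : Set (En n))
    (cfat ro : ℝ) : Prop :=
  ∀ z ∈ E, ∀ r : ℝ, 0 < r → r < ro →
    cfat ≤ capPhiInf (fun x => a (z + r • x)) p q (shiftedSet E z r) (ball (0 : En n) 1)

/-- Local uniform `p`-fatness with parameters `cfat` and `ro`. -/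
def LocUnifPFat {n : ℕ} (p : ℝ) (E : Set (En n)) (cfat ro : ℝ) : Prop :=
  ∀ z ∈ E, ∀ r : ℝ, 0 < r → r < ro →
    cfat ≤ capP p (shiftedSet E z r) (ball (0 : En n) 1)

/-- `Lip_0(Ω)`: Lipschitz functions with compact support contained in `Ω`,
extended by zero to `ℝⁿ`. -/
def Lip0 {n : ℕ} (Ω : Set (En n)) : Set (En n → ℝ) :=
  {u | (∃ K, LipschitzWith K u) ∧ HasCompactSupport u ∧ tsupport u ⊆ Ω}

/-- Restricted centered maximal operator `M_R f(x) = sup_{0<r<R} ⨍_{B(x,r)} |f|`. -/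
def maxOp {n : ℕ} (R : ℝ) (f : En n → ℝ) (x : En n) : ℝ :=
  ⨆ r : Ioo (0 : ℝ) R, ⨍ y in ball x (r : ℝ), |f y|

open scoped ENNReal NNReal Topology

/-! For an admissible `u` at level `t`, the rescaled function `u / t` is admissible for `cap_p`, so
`t^p cap_p(E;O) ≤ ∫_O |∇u|^p`; Jensen's inequality for `s ↦ s^{q/p}` then gives
`t^q |O| (cap_p(E;O)/|O|)^{q/p} ≤ ∫_O |∇u|^q`. Bounding `a` below by `a_O^-` and adding the two
estimates gives `min {…} · φ_O^-(t) ≤ ∫_O φ(x, |∇u|)`, i.e. the claim with `c = 1`. -/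

theorem continuous_of_abs_sub_le_mul_rpow {X : Type*} [PseudoMetricSpace X] {f : X → ℝ}
    {A α : ℝ} (hα : 0 < α) (hf : ∀ x y, |f x - f y| ≤ A * dist x y ^ α) : Continuous f := by
  refine continuous_iff_continuousAt.2 fun x => tendsto_iff_dist_tendsto_zero.2 ?_
  have hbound : Filter.Tendsto (fun y => A * dist y x ^ α) (𝓝 x) (𝓝 0) :=
    (continuous_const.mul ((continuous_id.dist continuous_const).rpow_const
      fun _ => Or.inr hα.le)).tendsto' x 0 (by simp [Real.zero_rpow hα.ne'])
  exact squeeze_zero (fun _ => dist_nonneg) (fun y => (Real.dist_eq _ _).trans_le (hf y x)) hbound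

theorem measureReal_mul_rpow_div_le_setIntegral_rpow {X : Type*} [MeasurableSpace X]
    {μ : Measure X} {s : Set X} (hs : μ s ≠ ∞) {f : X → ℝ} (hf0 : ∀ x, 0 ≤ f x)
    {r : ℝ} (hr : 1 ≤ r) (hf : IntegrableOn f s μ) (hfr : IntegrableOn (fun x => f x ^ r) s μ) :
    μ.real s * ((∫ x in s, f x ∂μ) / μ.real s) ^ r ≤ ∫ x in s, f x ^ r ∂μ := by
  rcases eq_or_ne (μ s) 0 with h0 | h0
  · simp [measureReal_def, h0]
  have hV : 0 < μ.real s := ENNReal.toReal_pos h0 hs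
  have hjensen := (convexOn_rpow hr).map_set_average_le (Real.continuous_rpow_const
    (zero_le_one.trans hr)).continuousOn isClosed_Ici h0 hs
    (Filter.Eventually.of_forall fun x => hf0 x) hf hfr
  simp only [setAverage_eq, smul_eq_mul] at hjensen
  rw [← le_div_iff₀' hV, div_eq_inv_mul]
  simpa [div_eq_inv_mul] using hjensen

section Capacity

variable {n : ℕ} {p q t : ℝ} {E O : Set (En n)} {u : En n → ℝ}

theorem gnorm_nonneg (u : En n → ℝ) (x : En n) : 0 ≤ gnorm u x := norm_nonneg _

theorem gnorm_smul (c : ℝ) (u : En n → ℝ) (x : En n) : gnorm (c • u) x = |c| * gnorm u x := by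
  rw [gnorm, gnorm, fderiv_const_smul_field, Pi.smul_apply, norm_smul, Real.norm_eq_abs]

theorem gnorm_le_of_lipschitzOnWith {K : ℝ≥0} (hO : IsOpen O) (hK : LipschitzOnWith K u (closure O))
    {x : En n} (hx : x ∈ O) : gnorm u x ≤ K :=
  norm_fderiv_le_of_lipschitzOn ℝ (Filter.mem_of_superset (hO.mem_nhds hx) subset_closure) hK

theorem integrableOn_gnorm_rpow {K : ℝ≥0} (hO : IsOpen O) (hOfin : volume O ≠ ∞)
    (hK : LipschitzOnWith K u (closure O)) {r : ℝ} (hr : 0 ≤ r) :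
    IntegrableOn (fun x => gnorm u x ^ r) O := by
  refine Measure.integrableOn_of_bounded hOfin
    ((measurable_fderiv ℝ u).norm.pow_const r).aestronglyMeasurable (M := (K : ℝ) ^ r) ?_
  refine ae_restrict_of_forall_mem hO.measurableSet fun x hx => ?_
  rw [Real.norm_of_nonneg (Real.rpow_nonneg (gnorm_nonneg u x) r)]
  exact Real.rpow_le_rpow (norm_nonneg _) (gnorm_le_of_lipschitzOnWith hO hK hx) hr

theorem smul_mem_Adm (hu : u ∈ Adm E O t) {c : ℝ} (hc : 0 ≤ c) : c • u ∈ Adm E O (c * t) := by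
  obtain ⟨⟨K, hK⟩, huE, huO⟩ := hu
  exact ⟨⟨_, (lipschitzWith_smul c).comp_lipschitzOnWith hK⟩,
    fun x hx => mul_le_mul_of_nonneg_left (huE x hx) hc, fun x hx => by simp [huO x hx]⟩

theorem setIntegral_gnorm_rpow_nonneg (u : En n → ℝ) : 0 ≤ ∫ x in O, gnorm u x ^ p :=
  integral_nonneg fun x => Real.rpow_nonneg (gnorm_nonneg u x) p

theorem capP_nonneg : 0 ≤ capP p E O :=
  Real.sInf_nonneg <| by rintro _ ⟨u, -, rfl⟩; exact setIntegral_gnorm_rpow_nonneg u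

theorem rpow_mul_capP_le (ht : 0 < t) (hu : u ∈ Adm E O t) :
    t ^ p * capP p E O ≤ ∫ x in O, gnorm u x ^ p := by
  have hbdd : BddBelow ((fun u => ∫ x in O, gnorm u x ^ p) '' Adm E O 1) :=
    ⟨0, by rintro _ ⟨v, -, rfl⟩; exact setIntegral_gnorm_rpow_nonneg v⟩
  have hu' : t⁻¹ • u ∈ Adm E O 1 := by
    simpa [inv_mul_cancel₀ ht.ne'] using smul_mem_Adm hu (inv_nonneg.2 ht.le)
  have hscale (x : En n) : gnorm (t⁻¹ • u) x ^ p = (t ^ p)⁻¹ * gnorm u x ^ p := by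
    rw [gnorm_smul, abs_of_pos (inv_pos.2 ht), Real.mul_rpow (inv_nonneg.2 ht.le) (gnorm_nonneg u x),
      Real.inv_rpow ht.le]
  have hcap := csInf_le hbdd ⟨_, hu', rfl⟩
  simp only [hscale, integral_const_mul] at hcap
  rwa [← le_inv_mul_iff₀ (Real.rpow_pos_of_pos ht p)]

theorem rpow_mul_volume_mul_capP_div_rpow_le (hp : 0 < p) (hpq : p < q) (hO : IsOpen O)
    (hOfin : volume O ≠ ∞) (ht : 0 < t) (hu : u ∈ Adm E O t) :
    t ^ q * ((volume O).toReal * (capP p E O / (volume O).toReal) ^ (q / p)) ≤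
      ∫ x in O, gnorm u x ^ q := by
  obtain ⟨K, hK⟩ := hu.1
  set C := capP p E O
  set V := (volume O).toReal
  have hrpow (x : En n) : (gnorm u x ^ p) ^ (q / p) = gnorm u x ^ q := by
    rw [← Real.rpow_mul (gnorm_nonneg u x), mul_div_cancel₀ q hp.ne']
  have htC : 0 ≤ t ^ p * C := mul_nonneg (Real.rpow_nonneg ht.le p) capP_nonneg
  have hqp : 0 ≤ q / p := div_nonneg (hp.trans hpq).le hp.le
  calc t ^ q * (V * (C / V) ^ (q / p)) = V * (t ^ p * C / V) ^ (q / p) := by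
        rw [mul_div_assoc, Real.mul_rpow (Real.rpow_nonneg ht.le p) (div_nonneg capP_nonneg
          ENNReal.toReal_nonneg), ← Real.rpow_mul ht.le, mul_div_cancel₀ q hp.ne']
        ring
    _ ≤ V * ((∫ x in O, gnorm u x ^ p) / V) ^ (q / p) := by
      gcongr
      exact rpow_mul_capP_le ht hu
    _ ≤ ∫ x in O, (gnorm u x ^ p) ^ (q / p) :=
      measureReal_mul_rpow_div_le_setIntegral_rpow hOfin
        (fun x => Real.rpow_nonneg (gnorm_nonneg u x) p) ((one_le_div₀ hp).2 hpq.le)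
        (integrableOn_gnorm_rpow hO hOfin hK hp.le)
        (by simpa only [hrpow] using integrableOn_gnorm_rpow hO hOfin hK (hp.trans hpq).le)
    _ = ∫ x in O, gnorm u x ^ q := by simp only [hrpow]

theorem aInfOn_nonneg {a : En n → ℝ} (ha : ∀ x ∈ O, 0 ≤ a x) : 0 ≤ aInfOn a O :=
  Real.sInf_nonneg <| by rintro _ ⟨x, hx, rfl⟩; exact ha x hx

theorem aInfOn_le {a : En n → ℝ} (ha : ∀ x ∈ O, 0 ≤ a x) {x : En n} (hx : x ∈ O) :
    aInfOn a O ≤ a x :=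
  csInf_le ⟨0, by rintro _ ⟨y, hy, rfl⟩; exact ha y hy⟩ (mem_image_of_mem a hx)

theorem phiMinus_pos {a : En n → ℝ} (ha : ∀ x ∈ O, 0 ≤ a x) (ht : 0 < t) :
    0 < phiMinus a p q O t :=
  add_pos_of_pos_of_nonneg (Real.rpow_pos_of_pos ht p)
    (mul_nonneg (aInfOn_nonneg ha) (Real.rpow_nonneg ht.le q))

theorem min_capP_le_integral_phi_div {a : En n → ℝ} {M : ℝ} (hp : 0 < p) (hpq : p < q)
    (ha : ∀ x ∈ O, 0 ≤ a x) (ha_meas : Measurable a) (haM : ∀ x ∈ O, a x ≤ M)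
    (hO : IsOpen O) (hOfin : volume O ≠ ∞) (ht : 0 < t) (hu : u ∈ Adm E O t) :
    min (capP p E O) ((volume O).toReal * (capP p E O / (volume O).toReal) ^ (q / p)) ≤
      ∫ x in O, phi a p q x (gnorm u x) / phiMinus a p q O t := by
  obtain ⟨K, hK⟩ := hu.1
  set C := capP p E O
  set V := (volume O).toReal
  have hintp := integrableOn_gnorm_rpow hO hOfin hK hp.le
  have hintq := integrableOn_gnorm_rpow hO hOfin hK (hp.trans hpq).le
  have hintaq : IntegrableOn (fun x => a x * gnorm u x ^ q) O :=
    hintq.bdd_mul ha_meas.aestronglyMeasurable.restrict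
      (ae_restrict_of_forall_mem hO.measurableSet fun x hx => by
        rw [Real.norm_of_nonneg (ha x hx)]; exact haM x hx)
  have hCq := rpow_mul_volume_mul_capP_div_rpow_le hp hpq hO hOfin ht hu
  have ha_inf : aInfOn a O * ∫ x in O, gnorm u x ^ q ≤ ∫ x in O, a x * gnorm u x ^ q := by
    rw [← integral_const_mul]
    exact setIntegral_mono_on (hintq.const_mul _) hintaq hO.measurableSet fun x hx =>
      mul_le_mul_of_nonneg_right (aInfOn_le ha hx) (Real.rpow_nonneg (gnorm_nonneg u x) q)
  simp only [phi]
  rw [integral_div, integral_add hintp hintaq, le_div_iff₀ (phiMinus_pos ha ht), phiMinus]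
  have hainf := aInfOn_nonneg ha
  set m := min C (V * (C / V) ^ (q / p))
  calc m * (t ^ p + aInfOn a O * t ^ q) = t ^ p * m + aInfOn a O * (t ^ q * m) := by ring
    _ ≤ t ^ p * C + aInfOn a O * (t ^ q * (V * (C / V) ^ (q / p))) := by
      gcongr
      exacts [min_le_left _ _, min_le_right _ _]
    _ ≤ _ := add_le_add (rpow_mul_capP_le ht hu) ((mul_le_mul_of_nonneg_left hCq hainf).trans ha_inf)

theorem min_capP_le_capPhiLevel {a : En n → ℝ} {M : ℝ} (hp : 0 < p) (hpq : p < q)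
    (ha : ∀ x ∈ O, 0 ≤ a x) (ha_meas : Measurable a) (haM : ∀ x ∈ O, a x ≤ M)
    (hO : IsOpen O) (hOfin : volume O ≠ ∞) (ht : 0 < t) :
    min (capP p E O) ((volume O).toReal * (capP p E O / (volume O).toReal) ^ (q / p)) ≤
      capPhiLevel a p q t E O := by
  rcases (Adm E O t).eq_empty_or_nonempty with hempty | ⟨u, hu⟩
  · -- no admissible functions at any level: both capacities are the junk value `sInf ∅ = 0`
    have hempty₁ : Adm E O 1 = ∅ := eq_empty_of_forall_notMem fun v hv => by
      simpa [hempty] using smul_mem_Adm hv ht.le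
    simp [capPhiLevel, capLevel, capP, hempty, hempty₁]
  · refine le_csInf ⟨_, u, hu, rfl⟩ ?_
    rintro _ ⟨v, hv, rfl⟩
    exact min_capP_le_integral_phi_div hp hpq ha ha_meas haM hO hOfin ht hv

end Capacity

/-- **Lower bound for the infimal capacity** (Lemma 2.3):
`cap_φ^inf(E;O) ≥ c(p,q) min{cap_p(E;O), |O| (cap_p(E;O)/|O|)^{q/p}}`. -/
theorem capPhiInf_lower_bound
    (p q : ℝ) (hp : 1 < p) (hpq : p < q) :
    ∃ c : ℝ, 0 < c ∧
      ∀ (n : ℕ) (α A : ℝ) (a : En n → ℝ) (E O : Set (En n)),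
        0 < α → α ≤ 1 → (∀ x, 0 ≤ a x) → 0 ≤ A →
        (∀ x y, |a x - a y| ≤ A * dist x y ^ α) →
        IsCompact E → E ⊆ O → IsOpen O → Bornology.IsBounded O →
        c * min (capP p E O)
            ((volume O).toReal * (capP p E O / (volume O).toReal) ^ (q / p)) ≤
          capPhiInf a p q E O := by
  refine ⟨1, one_pos, fun n α A a E O hα _ ha _ hHolder _ _ hO hObd => ?_⟩
  have ha_cont : Continuous a := continuous_of_abs_sub_le_mul_rpow hα hHolder
  obtain ⟨M, hM⟩ := hObd.isCompact_closure.exists_bound_of_continuousOn ha_cont.continuousOn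
  rw [one_mul]
  exact le_ciInf fun t => min_capP_le_capPhiLevel (zero_lt_one.trans hp) hpq (fun x _ => ha x)
    ha_cont.measurable (fun x hx => (le_abs_self _).trans (hM x (subset_closure hx)))
    hO hObd.measure_lt_top.ne t.2
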